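/- Let k, ℓ ≥ 1 be integers and let s_{00}, s_{10}, …, s_{k0}, s_{k1}, …, s_{kℓ} ∈ ℂ all have real part > 1. Let Z = Σ (∏_{i=0}^{k} n_i^{−s_{i0}}) (∏_{j=1}^{ℓ} u_j^{−s_{kj}}), the sum over positive integers n_0 ≤ n_1 ≤ ⋯ ≤ n_k and u_ℓ < u_{ℓ−1} < ⋯ < u_1 < n_k (this is the skew Schur multiple zeta-function ζ_{λ/μ} of anti-hook shape with λ = ((k+1)^{ℓ+1}) and μ = (k^ℓ)). Then Z = Σ_{i=0}^{k} (−1)^{k−i} ζ*(s_{00}, s_{10}, …, s_{i−1,0}) · ζ(s_{kℓ}, s_{k,ℓ−1}, …, s_{k1}, s_{k0}, s_{k−1,0}, …, s_{i0}), where the factor ζ*(s_{00},…,s_{i−1,0}) is interpreted as 1 when i = 0. -/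

import Mathlib

/-- The Euler–Zagier multiple zeta-function
`ζ(s₁,…,s_r) = Σ_{0<m₁<⋯<m_r} m₁^{-s₁}⋯m_r^{-s_r}` (equal to `1` when `r = 0`). -/
noncomputable def mzeta {r : ℕ} (s : Fin r → ℂ) : ℂ :=
  ∑' m : {m : Fin r → ℕ+ // StrictMono m}, ∏ i, ((m.1 i : ℕ) : ℂ) ^ (-(s i))

/-- The star-variant
`ζ*(s₁,…,s_r) = Σ_{0<m₁≤⋯≤m_r} m₁^{-s₁}⋯m_r^{-s_r}` (equal to `1` when `r = 0`). -/
noncomputable def mzetaStar {r : ℕ} (s : Fin r → ℂ) : ℂ :=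
  ∑' m : {m : Fin r → ℕ+ // Monotone m}, ∏ i, ((m.1 i : ℕ) : ℂ) ^ (-(s i))


/-- The skew Schur multiple zeta-function of anti-hook shape
`((k+1)^{ℓ+1})/(k^ℓ)` (Matsumoto–Nakasuji): the bottom row carries entries
`n₀ ≤ n₁ ≤ ⋯ ≤ n_k` with variables `s_{00}, …, s_{k0}` (here `s 0, …, s k`),
and the column above the last entry of the bottom row carries entries
`u_ℓ < u_{ℓ−1} < ⋯ < u₁ < n_k` with `u_j` carrying the variable `s_{kj}`
(here `t j`).  The column together with the corner `n_k` is encoded as a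
strictly monotone tuple `nc.2 : Fin (ℓ+1) → ℕ+` read from top to bottom,
so `nc.2 i = u_{ℓ−i}` for `i < ℓ` and `nc.2 ℓ = n_k`. -/
noncomputable def antiHookZeta (k l : ℕ) (s t : ℕ → ℂ) : ℂ :=
  ∑' x : {nc : (Fin (k + 1) → ℕ+) × (Fin (l + 1) → ℕ+) //
      Monotone nc.1 ∧ StrictMono nc.2 ∧ nc.1 (Fin.last k) = nc.2 (Fin.last l)},
    (∏ i : Fin (k + 1), ((x.1.1 i : ℕ) : ℂ) ^ (-(s (i : ℕ)))) *
    (∏ j : Fin l, ((x.1.2 j.castSucc : ℕ) : ℂ) ^ (-(t (l - (j : ℕ)))))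

/-- The term of a multiple zeta value. -/
noncomputable def zterm {r : ℕ} (σ : Fin r → ℂ) (m : Fin r → ℕ+) : ℂ :=
  ∏ i, ((m i : ℕ) : ℂ) ^ (-(σ i))

/-- Index type of the auxiliary anti-hook sum. -/
def WT (m L : ℕ) :=
  {nc : (Fin (m + 1) → ℕ+) × (Fin (L + 1) → ℕ+) //
      Monotone nc.1 ∧ StrictMono nc.2 ∧ nc.1 (Fin.last m) = nc.2 (Fin.last L)}

/-- Auxiliary anti-hook zeta with `ℕ`-indexed exponents. -/
noncomputable def W (m L : ℕ) (a b : ℕ → ℂ) : ℂ :=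
  ∑' x : WT m L,
    (∏ i : Fin (m + 1), ((x.1.1 i : ℕ) : ℂ) ^ (-(a (i : ℕ)))) *
    (∏ j : Fin L, ((x.1.2 j.castSucc : ℕ) : ℂ) ^ (-(b (j : ℕ))))

lemma mzeta_cast {r r' : ℕ} (h : r = r') (s : Fin r' → ℂ) (s' : Fin r → ℂ)
    (hs : ∀ x : Fin r, s' x = s (Fin.cast h x)) : mzeta s' = mzeta s := by
  subst h
  congr 1
  exact funext fun x => hs x

lemma mzetaStar_nil (s : Fin 0 → ℂ) : mzetaStar s = 1 := by
  rw [mzetaStar]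
  haveI : Unique {m : Fin 0 → ℕ+ // Monotone m} :=
    ⟨⟨⟨fun i => i.elim0, fun i => i.elim0⟩⟩, fun x => Subtype.ext (funext fun i => i.elim0)⟩
  rw [tsum_eq_single default fun b hb => absurd (Subsingleton.elim b default) hb]
  simp

lemma monotone_snoc {m : ℕ} {n : Fin (m + 1) → ℕ+} (hn : Monotone n) {x : ℕ+}
    (hx : n (Fin.last m) ≤ x) : Monotone (Fin.snoc n x : Fin (m + 1 + 1) → ℕ+) := by
  rw [Fin.monotone_iff_le_succ]
  intro i
  induction i using Fin.lastCases with
  | last => simpa [Fin.snoc_castSucc, Fin.succ_last, Fin.snoc_last] using hx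
  | cast j =>
    rw [Fin.snoc_castSucc, Fin.succ_castSucc, Fin.snoc_castSucc]
    exact hn (Fin.castSucc_le_succ j)

lemma strictMono_snoc {L : ℕ} {c : Fin (L + 1) → ℕ+} (hc : StrictMono c) {x : ℕ+}
    (hx : c (Fin.last L) < x) : StrictMono (Fin.snoc c x : Fin (L + 1 + 1) → ℕ+) := by
  rw [Fin.strictMono_iff_lt_succ]
  intro i
  induction i using Fin.lastCases with
  | last => simpa [Fin.snoc_castSucc, Fin.succ_last, Fin.snoc_last] using hx
  | cast j =>
    rw [Fin.snoc_castSucc, Fin.succ_castSucc, Fin.snoc_castSucc]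
    exact hc (Fin.castSucc_lt_succ (i := j))

lemma summable_pnat_rpow {σ : ℝ} (h : 1 < σ) :
    Summable (fun n : ℕ+ => ((n : ℕ) : ℝ) ^ (-σ)) :=
  (Real.summable_nat_rpow.mpr (by linarith)).comp_injective PNat.coe_injective

lemma summable_pi_rpow {r : ℕ} (σ : Fin r → ℝ) (hσ : ∀ i, 1 < σ i) :
    Summable (fun m : Fin r → ℕ+ => ∏ i, ((m i : ℕ) : ℝ) ^ (-(σ i))) := by
  induction r with
  | zero =>
    simpa using summable_of_finite_support (Set.Finite.subset (Set.finite_univ) (by simp))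
  | succ n ih =>
    rw [← (Fin.consEquiv (fun _ : Fin (n + 1) => ℕ+)).summable_iff]
    have h1 : Summable (fun x : ℕ+ => ((x : ℕ) : ℝ) ^ (-(σ 0))) := summable_pnat_rpow (hσ 0)
    have h2 : Summable (fun m : Fin n → ℕ+ => ∏ i, ((m i : ℕ) : ℝ) ^ (-(σ i.succ))) :=
      ih _ fun i => hσ i.succ
    have hmain := h1.mul_of_nonneg h2
        (fun x => Real.rpow_nonneg (Nat.cast_nonneg _) _)
        (fun m => Finset.prod_nonneg fun i _ => Real.rpow_nonneg (Nat.cast_nonneg _) _)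
    refine hmain.congr fun p => ?_
    show _ = ∏ i : Fin (n+1), (((Fin.consEquiv (fun _ : Fin (n + 1) => ℕ+)) p i : ℕ) : ℝ) ^ (-(σ i))
    rw [Fin.prod_univ_succ]
    simp [Fin.consEquiv]

lemma norm_zterm {r : ℕ} (σ : Fin r → ℂ) (m : Fin r → ℕ+) :
    ‖zterm σ m‖ = ∏ i, ((m i : ℕ) : ℝ) ^ (-(σ i).re) := by
  rw [zterm, norm_prod]
  exact Finset.prod_congr rfl fun i _ => by
    rw [Complex.norm_natCast_cpow_of_pos (m i).pos, Complex.neg_re]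

lemma summable_norm_zterm {r : ℕ} (σ : Fin r → ℂ) (hσ : ∀ i, 1 < (σ i).re) :
    Summable (fun m : Fin r → ℕ+ => ‖zterm σ m‖) := by
  refine (summable_pi_rpow (fun i => (σ i).re) hσ).congr fun m => ?_
  rw [norm_zterm]

lemma summable_norm_zterm_subtype {r : ℕ} (σ : Fin r → ℂ) (hσ : ∀ i, 1 < (σ i).re)
    (P : (Fin r → ℕ+) → Prop) :
    Summable (fun m : {m : Fin r → ℕ+ // P m} => ‖zterm σ m.1‖) :=
  (summable_norm_zterm σ hσ).subtype {m | P m}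

lemma W_zero (L : ℕ) (a b : ℕ → ℂ) :
    W 0 L a b = mzeta (fun x : Fin (L + 1) => if (x : ℕ) < L then b (x : ℕ) else a 0) := by
  rw [W, mzeta]
  set E : Fin (L + 1) → ℂ := fun x => if (x : ℕ) < L then b (x : ℕ) else a 0 with hE
  let e : {c : Fin (L + 1) → ℕ+ // StrictMono c} ≃ WT 0 L :=
    { toFun := fun c => ⟨((fun _ => c.1 (Fin.last L)), c.1),
        ⟨monotone_const, c.2, rfl⟩⟩
      invFun := fun x => ⟨x.1.2, x.2.2.1⟩
      left_inv := fun c => rfl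
      right_inv := fun x => by
        apply Subtype.ext
        refine Prod.ext ?_ rfl
        funext i
        have hi : i = Fin.last 0 := Fin.ext (by omega)
        rw [hi]
        exact x.2.2.2.symm }
  rw [← e.tsum_eq]
  refine tsum_congr fun c => ?_
  show (∏ i : Fin 1, ((c.1 (Fin.last L) : ℕ) : ℂ) ^ (-(a (i : ℕ)))) *
      (∏ j : Fin L, ((c.1 j.castSucc : ℕ) : ℂ) ^ (-(b (j : ℕ)))) = _
  rw [Fin.prod_univ_one, Fin.prod_univ_castSucc (f := fun i : Fin (L + 1) =>
    ((c.1 i : ℕ) : ℂ) ^ (-(E i)))]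
  have h1 : ∀ j : Fin L, E j.castSucc = b (j : ℕ) := fun j => by
    simp [hE, j.isLt]
  have h2 : E (Fin.last L) = a 0 := by simp [hE]
  rw [h2]
  have h3 : ∀ j : Fin L, ((c.1 j.castSucc : ℕ) : ℂ) ^ (-(E j.castSucc)) =
      ((c.1 j.castSucc : ℕ) : ℂ) ^ (-(b (j : ℕ))) := fun j => by rw [h1]
  rw [Finset.prod_congr rfl fun j _ => h3 j]
  rw [Fin.val_zero]
  ring

set_option maxHeartbeats 2000000 in
lemma W_succ (m L : ℕ) (a b : ℕ → ℂ)
    (ha : ∀ i ≤ m + 1, 1 < (a i).re) (hb : ∀ j < L, 1 < (b j).re) :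
    W (m + 1) L a b =
      mzetaStar (fun x : Fin (m + 1) => a (x : ℕ)) *
        mzeta (fun x : Fin (L + 1) => if (x : ℕ) < L then b (x : ℕ) else a (m + 1)) -
      W m (L + 1) a (fun j => if j < L then b j else a (m + 1)) := by
  set σ₁ : Fin (m + 1) → ℂ := fun x => a (x : ℕ) with hσ₁def
  set E : Fin (L + 1) → ℂ := fun x => if (x : ℕ) < L then b (x : ℕ) else a (m + 1) with hEdef
  have hσ₁ : ∀ i, 1 < (σ₁ i).re := fun i => ha i (by omega)
  have hE : ∀ j, 1 < (E j).re := fun j => by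
    by_cases h : (j : ℕ) < L
    · simpa [hEdef, h] using hb j h
    · simpa [hEdef, h] using ha (m + 1) le_rfl
  have h1 : Summable (fun n : {n : Fin (m + 1) → ℕ+ // Monotone n} => ‖zterm σ₁ n.1‖) :=
    summable_norm_zterm_subtype σ₁ hσ₁ _
  have h2 : Summable (fun c : {c : Fin (L + 1) → ℕ+ // StrictMono c} => ‖zterm E c.1‖) :=
    summable_norm_zterm_subtype E hE _
  have hprod : mzetaStar σ₁ * mzeta E =
      ∑' p : {n : Fin (m + 1) → ℕ+ // Monotone n} × {c : Fin (L + 1) → ℕ+ // StrictMono c},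
        zterm σ₁ p.1.1 * zterm E p.2.1 := by
    exact tsum_mul_tsum_of_summable_norm (R := ℂ)
      (f := fun n : {n : Fin (m + 1) → ℕ+ // Monotone n} => zterm σ₁ n.1)
      (g := fun c : {c : Fin (L + 1) → ℕ+ // StrictMono c} => zterm E c.1) h1 h2
  have hsum : Summable (fun p : {n : Fin (m + 1) → ℕ+ // Monotone n} ×
      {c : Fin (L + 1) → ℕ+ // StrictMono c} => zterm σ₁ p.1.1 * zterm E p.2.1) :=
    summable_mul_of_summable_norm (R := ℂ)
      (f := fun n : {n : Fin (m + 1) → ℕ+ // Monotone n} => zterm σ₁ n.1)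
      (g := fun c : {c : Fin (L + 1) → ℕ+ // StrictMono c} => zterm E c.1) h1 h2
  set S : Set ({n : Fin (m + 1) → ℕ+ // Monotone n} × {c : Fin (L + 1) → ℕ+ // StrictMono c}) :=
    {p | p.1.1 (Fin.last m) ≤ p.2.1 (Fin.last L)} with hSdef
  have hpart := hsum.tsum_subtype_add_tsum_subtype_compl S
  -- the `S` part is `W (m+1) L a b`
  have hS : ∑' x : ↥S, (zterm σ₁ x.1.1.1 * zterm E x.1.2.1) = W (m + 1) L a b := by
    let eS : WT (m + 1) L ≃ ↥S :=
      { toFun := fun w => ⟨(⟨fun i => w.1.1 i.castSucc,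
            fun i j hij => w.2.1 (Fin.castSucc_le_castSucc_iff.mpr hij)⟩, ⟨w.1.2, w.2.2.1⟩),
          show w.1.1 (Fin.last m).castSucc ≤ w.1.2 (Fin.last L) from
            w.2.2.2 ▸ w.2.1 (Fin.le_last _)⟩
        invFun := fun x => ⟨(Fin.snoc x.1.1.1 (x.1.2.1 (Fin.last L)), x.1.2.1),
          ⟨monotone_snoc x.1.1.2 x.2, x.1.2.2, by simp [Fin.snoc_last]⟩⟩
        left_inv := fun w => by
          apply Subtype.ext
          refine Prod.ext ?_ rfl
          funext i
          induction i using Fin.lastCases with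
          | last => simpa [Fin.snoc_last] using w.2.2.2.symm
          | cast j => simp [Fin.snoc_castSucc]
        right_inv := fun x => by
          apply Subtype.ext
          refine Prod.ext ?_ rfl
          apply Subtype.ext
          funext i
          simp [Fin.snoc_castSucc] }
    rw [W, ← Equiv.tsum_eq eS (fun x : ↥S => zterm σ₁ x.1.1.1 * zterm E x.1.2.1)]
    refine tsum_congr fun w => ?_
    show zterm σ₁ (fun i => w.1.1 i.castSucc) * zterm E w.1.2 = _
    rw [zterm, zterm]
    rw [Fin.prod_univ_castSucc (f := fun j : Fin (L + 1) => ((w.1.2 j : ℕ) : ℂ) ^ (-(E j)))]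
    rw [Fin.prod_univ_castSucc (f := fun i : Fin (m + 1 + 1) => ((w.1.1 i : ℕ) : ℂ) ^ (-(a (i : ℕ))))]
    have e1 : ∀ j : Fin L, E j.castSucc = b (j : ℕ) := fun j => by simp [hEdef, j.isLt]
    have e2 : E (Fin.last L) = a (m + 1) := by simp [hEdef]
    have e3 : ∀ i : Fin (m + 1), σ₁ i = a ((i.castSucc : ℕ)) := fun i => by
      simp [hσ₁def]
    have e4 : w.1.1 (Fin.last (m + 1)) = w.1.2 (Fin.last L) := w.2.2.2
    rw [Finset.prod_congr rfl fun (j : Fin L) _ => by rw [e1 j],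
        Finset.prod_congr rfl fun (i : Fin (m + 1)) _ => by rw [e3 i], e2, e4, Fin.val_last]
    ring
  -- the complement part is `W m (L+1) a b''`
  have hSc : ∑' x : ↥Sᶜ, (zterm σ₁ x.1.1.1 * zterm E x.1.2.1) =
      W m (L + 1) a (fun j => if j < L then b j else a (m + 1)) := by
    let eC : WT m (L + 1) ≃ ↥Sᶜ :=
      { toFun := fun w => ⟨(⟨w.1.1, w.2.1⟩, ⟨fun j => w.1.2 j.castSucc,
            fun i j hij => w.2.2.1 (Fin.castSucc_lt_castSucc_iff.mpr hij)⟩),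
          show ¬ (w.1.1 (Fin.last m) ≤ w.1.2 (Fin.last L).castSucc) from
            not_le.mpr (w.2.2.2 ▸ w.2.2.1 (Fin.castSucc_lt_last _))⟩
        invFun := fun x => ⟨(x.1.1.1, Fin.snoc x.1.2.1 (x.1.1.1 (Fin.last m))),
          ⟨x.1.1.2, strictMono_snoc x.1.2.2 (not_le.mp x.2), by simp [Fin.snoc_last]⟩⟩
        left_inv := fun w => by
          apply Subtype.ext
          refine Prod.ext rfl ?_
          funext i
          induction i using Fin.lastCases with
          | last => simpa [Fin.snoc_last] using w.2.2.2
          | cast j => simp [Fin.snoc_castSucc]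
        right_inv := fun x => by
          apply Subtype.ext
          refine Prod.ext rfl ?_
          apply Subtype.ext
          funext i
          simp [Fin.snoc_castSucc] }
    rw [W, ← Equiv.tsum_eq eC (fun x : ↥Sᶜ => zterm σ₁ x.1.1.1 * zterm E x.1.2.1)]
    refine tsum_congr fun w => ?_
    show zterm σ₁ w.1.1 * zterm E (fun j => w.1.2 j.castSucc) = _
    rw [hσ₁def, hEdef, zterm, zterm]
  rw [hS, hSc] at hpart
  rw [hprod, ← hpart]
  ring

lemma W_eq (a : ℕ → ℂ) : ∀ m, (∀ i ≤ m, 1 < (a i).re) → ∀ L (b : ℕ → ℂ),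
    (∀ j < L, 1 < (b j).re) →
    W m L a b = ∑ i ∈ Finset.range (m + 1), (-1 : ℂ) ^ (m - i) *
      mzetaStar (fun x : Fin i => a (x : ℕ)) *
      mzeta (fun x : Fin (L + (m - i) + 1) =>
        if (x : ℕ) < L then b (x : ℕ) else a (m - ((x : ℕ) - L))) := by
  intro m
  induction m with
  | zero =>
    intro _ L b _
    rw [Finset.sum_range_one, W_zero, mzetaStar_nil, Nat.sub_self, pow_zero, one_mul, one_mul]
    refine mzeta_cast rfl _ _ fun x => ?_
    by_cases h : (x : ℕ) < L
    · simp [h]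
    · simp only [Fin.coe_cast, if_neg h]
      exact congrArg a (by omega)
  | succ m ih =>
    intro ha L b hb
    have ha' : ∀ i ≤ m, 1 < (a i).re := fun i h => ha i (by omega)
    have hb'' : ∀ j < L + 1, 1 < ((fun j => if j < L then b j else a (m + 1)) j).re := by
      intro j hj
      by_cases h : j < L
      · simpa [h] using hb j h
      · simpa [h] using ha (m + 1) le_rfl
    have h1 : (-1 : ℂ) ^ (m + 1 - (m + 1)) *
        mzetaStar (fun x : Fin (m + 1) => a (x : ℕ)) *
        mzeta (fun x : Fin (L + (m + 1 - (m + 1)) + 1) =>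
          if (x : ℕ) < L then b (x : ℕ) else a (m + 1 - ((x : ℕ) - L))) =
        mzetaStar (fun x : Fin (m + 1) => a (x : ℕ)) *
        mzeta (fun x : Fin (L + 1) => if (x : ℕ) < L then b (x : ℕ) else a (m + 1)) := by
      rw [Nat.sub_self, pow_zero, one_mul]
      congr 1
      refine mzeta_cast (by omega) _ _ fun x => ?_
      have hx := x.isLt
      by_cases h : (x : ℕ) < L
      · simp [h]
      · simp only [Fin.coe_cast, if_neg h]
        exact congrArg a (by omega)
    have h2 : ∀ i ∈ Finset.range (m + 1),
        (-1 : ℂ) ^ (m + 1 - i) * mzetaStar (fun x : Fin i => a (x : ℕ)) *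
          mzeta (fun x : Fin (L + (m + 1 - i) + 1) =>
            if (x : ℕ) < L then b (x : ℕ) else a (m + 1 - ((x : ℕ) - L))) =
        -((-1 : ℂ) ^ (m - i) * mzetaStar (fun x : Fin i => a (x : ℕ)) *
          mzeta (fun x : Fin (L + 1 + (m - i) + 1) =>
            if (x : ℕ) < L + 1 then (if (x : ℕ) < L then b (x : ℕ) else a (m + 1))
            else a (m - ((x : ℕ) - (L + 1))))) := by
      intro i hi
      rw [Finset.mem_range] at hi
      have hmz : mzeta (fun x : Fin (L + (m + 1 - i) + 1) =>
            if (x : ℕ) < L then b (x : ℕ) else a (m + 1 - ((x : ℕ) - L))) =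
          mzeta (fun x : Fin (L + 1 + (m - i) + 1) =>
            if (x : ℕ) < L + 1 then (if (x : ℕ) < L then b (x : ℕ) else a (m + 1))
            else a (m - ((x : ℕ) - (L + 1)))) := by
        refine mzeta_cast (by omega) _ _ fun x => ?_
        have hx := x.isLt
        simp only [Fin.coe_cast]
        rcases Nat.lt_trichotomy (x : ℕ) L with h | h | h
        · rw [if_pos h, if_pos (by omega : (x : ℕ) < L + 1), if_pos h]
        · rw [if_neg (by omega), if_pos (by omega : (x : ℕ) < L + 1), if_neg (by omega)]
          exact congrArg a (by omega)
        · rw [if_neg (by omega), if_neg (by omega)]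
          exact congrArg a (by omega)
      rw [hmz, show m + 1 - i = (m - i) + 1 by omega, pow_succ]
      ring
    rw [W_succ m L a b ha hb, Finset.sum_range_succ, ih ha' (L + 1) _ hb'',
      Finset.sum_congr rfl h2, h1, Finset.sum_neg_distrib]
    ring

/-- Theorem 3.2 of Matsumoto–Nakasuji, "The roles of zeta-functions of root
systems in the theory of Schur multiple zeta-functions": the anti-hook skew
Schur multiple zeta-function equals
`Σ_{i=0}^{k} (−1)^{k−i} ζ*(s_{00},…,s_{i−1,0}) ζ(s_{kℓ},…,s_{k1},s_{k0},s_{k−1,0},…,s_{i0})`. -/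
theorem antihook_zeta_eq_sum (k l : ℕ) (hk : 1 ≤ k) (hl : 1 ≤ l) (s t : ℕ → ℂ)
    (hs : ∀ i, i ≤ k → 1 < (s i).re)
    (ht : ∀ j, 1 ≤ j → j ≤ l → 1 < (t j).re) :
    antiHookZeta k l s t =
      ∑ i ∈ Finset.range (k + 1),
        (-1 : ℂ) ^ (k - i) *
          mzetaStar (fun a : Fin i => s (a : ℕ)) *
          mzeta (fun a : Fin (l + (k - i) + 1) =>
            if (a : ℕ) < l then t (l - (a : ℕ)) else s (k - ((a : ℕ) - l))) := by
  have h : antiHookZeta k l s t = W k l s (fun j => t (l - j)) := rfl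
  rw [h, W_eq s k hs l _ (fun j hj => ht (l - j) (by omega) (by omega))]
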